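/- arXiv:1504.08197 — 8 statements merged into one kernel-verified Lean document; each statement's English description precedes it below -/
import Mathlib

section
/- For p > 1 and t > 1, the equation t^p · ((x-p)/x) · (x/(x-1))^p = 1 has a unique solution x in the interval (p, ∞). -/
/-!
Write the left-hand side as `t ^ p * exp (g x)` with
`g x = log (x - p) + (p - 1) log x - p log (x - 1)`, whose derivative
`p (p - 1) / (x (x - 1) (x - p))` is positive on `(p, ∞)`; so the left-hand side is strictly
increasing there. It is continuous, tends to `0` as `x → p⁺` and to `t ^ p > 1` as `x → ∞`,
so the intermediate value theorem gives a solution and monotonicity makes it unique.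
-/

open Real Filter Set Topology

noncomputable section

namespace UniqueSolution

variable {p t x : ℝ}

def lhs (p t x : ℝ) : ℝ := t ^ p * ((x - p) / x) * (x / (x - 1)) ^ p

def logProfile (p x : ℝ) : ℝ := log (x - p) + (p - 1) * log x - p * log (x - 1)

theorem hasDerivAt_logProfile (hx : x ≠ 0) (hx1 : x - 1 ≠ 0) (hxp : x - p ≠ 0) :
    HasDerivAt (logProfile p) (p * (p - 1) / (x * (x - 1) * (x - p))) x := by
  have hlog : ∀ c : ℝ, x - c ≠ 0 → HasDerivAt (fun y => log (y - c)) (x - c)⁻¹ x :=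
    fun c hc => by simpa using ((hasDerivAt_id x).sub_const c).log hc
  have := ((hlog p hxp).add ((hasDerivAt_log hx).const_mul (p - 1))).sub
    ((hlog 1 hx1).const_mul p)
  refine this.congr_deriv ?_
  field_simp
  ring

theorem strictMonoOn_logProfile (hp : 1 < p) : StrictMonoOn (logProfile p) (Ioi p) := by
  have hderiv : ∀ x ∈ Ioi p,
      HasDerivAt (logProfile p) (p * (p - 1) / (x * (x - 1) * (x - p))) x := fun x hx =>
    hasDerivAt_logProfile (by grind) (by grind) (by grind)
  refine strictMonoOn_of_hasDerivWithinAt_pos (convex_Ioi p)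
    (fun x hx => (hderiv x hx).continuousAt.continuousWithinAt)
    (fun x hx => (hderiv x (interior_subset hx)).hasDerivWithinAt) fun x hx => ?_
  rw [interior_Ioi, mem_Ioi] at hx
  have : 0 < x * (x - 1) * (x - p) := by
    apply mul_pos (mul_pos _ _) <;> linarith
  exact div_pos (mul_pos (by linarith) (by linarith)) this

theorem lhs_eq_mul_exp_logProfile (hp : 1 ≤ p) (hx : p < x) :
    lhs p t x = t ^ p * exp (logProfile p x) := by
  have hx0 : 0 < x := by linarith
  have hx1 : 0 < x - 1 := by linarith
  have hxp : 0 < x - p := by linarith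
  rw [logProfile, exp_sub, exp_add, exp_log hxp, mul_comm (p - 1), ← rpow_def_of_pos hx0,
    mul_comm p, ← rpow_def_of_pos hx1, rpow_sub_one hx0.ne', lhs,
    div_rpow hx0.le hx1.le]
  field_simp

theorem strictMonoOn_lhs (hp : 1 < p) (ht : 0 < t) : StrictMonoOn (lhs p t) (Ioi p) := by
  intro x hx y hy hxy
  rw [lhs_eq_mul_exp_logProfile hp.le hx, lhs_eq_mul_exp_logProfile hp.le hy]
  exact mul_lt_mul_of_pos_left (exp_strictMono (strictMonoOn_logProfile hp hx hy hxy))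
    (rpow_pos_of_pos ht p)

theorem continuousAt_lhs (hx : 1 < x) : ContinuousAt (lhs p t) x := by
  have hx0 : x ≠ 0 := by linarith
  have hx1 : x - 1 ≠ 0 := by linarith
  have hbase : ContinuousAt (fun y => y / (y - 1)) x :=
    continuousAt_id.div (continuousAt_id.sub continuousAt_const) hx1
  have hratio : ContinuousAt (fun y => (y - p) / y) x :=
    (continuousAt_id.sub continuousAt_const).div continuousAt_id hx0
  exact (continuousAt_const.mul hratio).mul (hbase.rpow_const (Or.inl (div_ne_zero hx0 hx1)))

theorem tendsto_lhs_nhdsGT (hp : 1 < p) : Tendsto (lhs p t) (𝓝[>] p) (𝓝 0) := by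
  have := (continuousAt_lhs (p := p) (t := t) hp).tendsto
  rw [lhs, sub_self, zero_div, mul_zero, zero_mul] at this
  exact this.mono_left nhdsWithin_le_nhds

theorem tendsto_sub_div_self_atTop (c : ℝ) :
    Tendsto (fun x : ℝ => (x - c) / x) atTop (𝓝 1) := by
  have : Tendsto (fun x : ℝ => 1 - c / x) atTop (𝓝 (1 - 0)) :=
    tendsto_const_nhds.sub (tendsto_const_nhds.div_atTop tendsto_id)
  rw [sub_zero] at this
  refine this.congr' ?_
  filter_upwards [eventually_ne_atTop 0] with x hx
  field_simp

theorem tendsto_lhs_atTop : Tendsto (lhs p t) atTop (𝓝 (t ^ p)) := by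
  have hbase : Tendsto (fun x : ℝ => x / (x - 1)) atTop (𝓝 1) := by
    simpa only [inv_div, inv_one] using (tendsto_sub_div_self_atTop 1).inv₀ one_ne_zero
  have := (tendsto_const_nhds (x := t ^ p)).mul ((tendsto_sub_div_self_atTop p).mul
    (hbase.rpow_const (p := p) (Or.inl one_ne_zero)))
  simp only [one_rpow, mul_one, ← mul_assoc] at this
  exact this

end UniqueSolution

end

open UniqueSolution in
/-- For p > 1 and t > 1, the equation t^p · ((x-p)/x) · (x/(x-1))^p = 1
has a unique solution x in (p, ∞). -/
theorem unique_solution_p1 (p t : ℝ) (hp : 1 < p) (ht : 1 < t) :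
    ∃! x : ℝ, p < x ∧ t ^ p * ((x - p) / x) * (x / (x - 1)) ^ p = 1 := by
  have hcont : ContinuousOn (lhs p t) (Ioi p) := fun x hx =>
    (continuousAt_lhs (hp.trans hx)).continuousWithinAt
  have hone : (1 : ℝ) ∈ Ioo 0 (t ^ p) := ⟨one_pos, one_lt_rpow ht (by linarith)⟩
  obtain ⟨x, hx, hx1⟩ := isPreconnected_Ioi.intermediate_value_Ioo
    (le_principal_iff.mpr self_mem_nhdsWithin) (le_principal_iff.mpr (Ioi_mem_atTop p)) hcont
    (tendsto_lhs_nhdsGT hp) tendsto_lhs_atTop hone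
  refine ⟨x, ⟨hx, hx1⟩, fun y hy => ?_⟩
  exact (strictMonoOn_lhs hp (by linarith)).injOn hy.1 hx (hy.2.trans hx1.symm)
end

section
/- For every p > 1 and every Q > 1, there exist exactly two real numbers α, ᾱ with 1 - 1/p < α < 1 < ᾱ such that Q = α^p/(1+p(α-1)) = ᾱ^p/(1+p(ᾱ-1)). -/
/-!
With `ℓ x = Q * (1 + p * (x - 1))`, the equation `Q = x ^ p / (1 + p * (x - 1))` on `x > 1 - 1/p`
says `x ^ p = ℓ x`. The strictly convex function `x ^ p` meets the line `ℓ` at most twice.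
It does meet it on both sides of `1`: at the zero `1 - 1/p` of `ℓ` we have `x ^ p > ℓ x`, at `1`
we have `1 < Q = ℓ 1`, and at `M = (Q p) ^ (1/(p-1))` the slope of `ℓ` equals `M ^ (p-1)`, so
`M ^ p - ℓ M = Q (p - 1) > 0`.
-/

open Set

theorem StrictConvexOn.eq_or_eq_of_apply_eq_affine {s : Set ℝ} {f : ℝ → ℝ}
    (hf : StrictConvexOn ℝ s f) {m k a b x : ℝ} (ha : a ∈ s) (hb : b ∈ s) (hx : x ∈ s)
    (hab : a < b) (hfa : f a = m * a + k) (hfb : f b = m * b + k) (hfx : f x = m * x + k) :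
    x = a ∨ x = b := by
  have slope_eq : ∀ {u v : ℝ}, u < v → (m * v + k - (m * u + k)) / (v - u) = m := by
    intro u v huv
    rw [show m * v + k - (m * u + k) = m * (v - u) by ring,
      mul_div_cancel_right₀ _ (sub_ne_zero.2 huv.ne')]
  have no_three : ∀ {u v w : ℝ}, u ∈ s → w ∈ s → u < v → v < w → f u = m * u + k →
      f v = m * v + k → f w = m * w + k → False := fun hu hw huv hvw hfu hfv hfw => by
    have := hf.slope_strict_mono_adjacent hu hw huv hvw
    rw [hfu, hfv, hfw, slope_eq huv, slope_eq hvw] at this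
    exact lt_irrefl m this
  rcases lt_trichotomy x a with hxa | rfl | hax
  · exact (no_three hx hb hxa hab hfx hfa hfb).elim
  · exact Or.inl rfl
  rcases lt_trichotomy x b with hxb | rfl | hbx
  · exact (no_three ha hb hax hxb hfa hfx hfb).elim
  · exact Or.inr rfl
  · exact (no_three ha hx hab hbx hfa hfb hfx).elim

section

variable {p Q : ℝ}

theorem one_add_mul_sub_one_pos (hp : 0 < p) {c : ℝ} (hc : 1 - 1 / p < c) :
    0 < 1 + p * (c - 1) := by
  have : 1 + p * (c - 1) = p * (c - (1 - 1 / p)) := by field_simp; ring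
  rw [this]
  exact mul_pos hp (sub_pos.2 hc)

theorem eq_rpow_div_iff (hp : 0 < p) {c : ℝ} (hc : 1 - 1 / p < c) :
    Q = c ^ p / (1 + p * (c - 1)) ↔ c ^ p = Q * (1 + p * (c - 1)) := by
  rw [eq_div_iff (one_add_mul_sub_one_pos hp hc).ne', eq_comm]

theorem continuous_rpow_sub_affine (hp : 0 ≤ p) :
    Continuous fun x : ℝ => x ^ p - Q * (1 + p * (x - 1)) := by
  have := Real.continuous_rpow_const hp
  fun_prop

theorem exists_rpow_eq_mem_Ioo (hp : 1 < p) (hQ : 1 < Q) :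
    ∃ a ∈ Ioo (1 - 1 / p) 1, a ^ p = Q * (1 + p * (a - 1)) := by
  have hp0 : 0 < p := by linarith
  have hl0 : 0 < 1 - 1 / p := by rw [sub_pos, div_lt_one hp0]; exact hp
  have hl1 : 1 - 1 / p < 1 := sub_lt_self 1 (by positivity)
  have hzero : 1 + p * (1 - 1 / p - 1) = 0 := by field_simp; ring
  have hg1 : (1 : ℝ) ^ p - Q * (1 + p * (1 - 1)) < 0 := by simp; linarith
  have hgl : 0 < (1 - 1 / p) ^ p - Q * (1 + p * (1 - 1 / p - 1)) := by
    rw [hzero, mul_zero, sub_zero]; exact Real.rpow_pos_of_pos hl0 p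
  obtain ⟨a, ha, hga⟩ := intermediate_value_Ioo' hl1.le
    (continuous_rpow_sub_affine hp0.le).continuousOn ⟨hg1, hgl⟩
  exact ⟨a, ha, sub_eq_zero.1 hga⟩

theorem exists_rpow_eq_one_lt (hp : 1 < p) (hQ : 1 < Q) :
    ∃ b, 1 < b ∧ b ^ p = Q * (1 + p * (b - 1)) := by
  have hp0 : 0 < p := by linarith
  have hQp : 1 < Q * p := one_lt_mul_of_lt_of_le hQ hp.le
  set M := (Q * p) ^ (p - 1)⁻¹
  have hM1 : 1 < M := Real.one_lt_rpow hQp (inv_pos.2 (sub_pos.2 hp))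
  have hMpow : M ^ (p - 1) = Q * p :=
    Real.rpow_inv_rpow (by linarith) (sub_pos.2 hp).ne'
  have hMp : M ^ p = Q * p * M := by
    rw [← hMpow, Real.rpow_sub_one (by linarith), div_mul_cancel₀ _ (by linarith)]
  have hgM : 0 < M ^ p - Q * (1 + p * (M - 1)) := by
    rw [hMp]; nlinarith
  have hg1 : (1 : ℝ) ^ p - Q * (1 + p * (1 - 1)) < 0 := by simp; linarith
  obtain ⟨b, hb, hgb⟩ := intermediate_value_Ioo hM1.le
    (continuous_rpow_sub_affine hp0.le).continuousOn ⟨hg1, hgM⟩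
  exact ⟨b, hb.1, sub_eq_zero.1 hgb⟩

end

/-- For p > 1 and Q > 1 there are exactly two numbers 1-1/p < α < 1 < ᾱ with
Q = α^p/(1+p(α-1)) = ᾱ^p/(1+p(ᾱ-1)). -/
theorem exactly_two_solutions (p Q : ℝ) (hp : 1 < p) (hQ : 1 < Q) :
    ∃ a b : ℝ, 1 - 1/p < a ∧ a < 1 ∧ 1 < b ∧
      Q = a ^ p / (1 + p * (a - 1)) ∧ Q = b ^ p / (1 + p * (b - 1)) ∧
      ∀ c : ℝ, 1 - 1/p < c → Q = c ^ p / (1 + p * (c - 1)) → c = a ∨ c = b := by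
  have hp0 : 0 < p := by linarith
  have hl0 : 0 ≤ 1 - 1 / p := by rw [sub_nonneg, div_le_one hp0]; exact hp.le
  obtain ⟨a, ⟨hla, ha1⟩, ha⟩ := exists_rpow_eq_mem_Ioo hp hQ
  obtain ⟨b, hb1, hb⟩ := exists_rpow_eq_one_lt hp hQ
  have hlb : 1 - 1 / p < b := by linarith
  refine ⟨a, b, hla, ha1, hb1, (eq_rpow_div_iff hp0 hla).2 ha, (eq_rpow_div_iff hp0 hlb).2 hb,
    fun c hlc hc => ?_⟩
  have affine : ∀ {x : ℝ}, x ^ p = Q * (1 + p * (x - 1)) → x ^ p = Q * p * x + Q * (1 - p) :=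
    fun h => by rw [h]; ring
  exact (strictConvexOn_rpow hp).eq_or_eq_of_apply_eq_affine (mem_Ici.2 (by linarith))
    (mem_Ici.2 (by linarith)) (mem_Ici.2 (by linarith)) (by linarith) (affine ha) (affine hb)
    (affine ((eq_rpow_div_iff hp0 hlc).1 hc))
end

section
/- For every p > 1 and Q > 1, the equation Q = ᾱ^p/(1 + p(ᾱ - 1)) has a unique solution ᾱ in [1, ∞), and this solution satisfies Q^{1/(p-1)} ≤ ᾱ < (pQ)^{1/(p-1)}. -/
/-!
Clearing the (positive) denominator, the solutions are the zeros on `[1, ∞)` of the convex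
function `g a = a ^ p - Q * (1 + p * (a - 1))`. Since `g 1 = 1 - Q < 0`, convexity allows at most
one zero to the right of `1`, and one exists by the intermediate value theorem because
`g ((p * Q) ^ (1 / (p - 1))) = (p - 1) * Q > 0`. At a zero `a`, writing `a ^ p = a * a ^ (p - 1)`
turns `g a = 0` into `a * (p * Q - a ^ (p - 1)) = (p - 1) * Q` and
`a * (a ^ (p - 1) - Q) = (p - 1) * Q * (a - 1)`, whence `Q < a ^ (p - 1) < p * Q`.
-/

open Set Real

theorem ConvexOn.eq_of_apply_eq_zero_of_apply_neg {s : Set ℝ} {f : ℝ → ℝ} (hf : ConvexOn ℝ s f)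
    {x₀ a b : ℝ} (hx₀ : x₀ ∈ s) (ha : a ∈ s) (hb : b ∈ s) (hx₀a : x₀ ≤ a) (hx₀b : x₀ ≤ b)
    (hfx₀ : f x₀ < 0) (hfa : f a = 0) (hfb : f b = 0) : a = b := by
  wlog hab : a < b generalizing a b
  · rcases (not_lt.mp hab).lt_or_eq with hba | hba
    · exact (this hb ha hx₀b hx₀a hfb hfa hba).symm
    · exact hba.symm
  have hx₀a' : x₀ < a := hx₀a.lt_of_ne (by rintro rfl; linarith)
  have hslope := hf.slope_mono_adjacent hx₀ hb hx₀a' hab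
  rw [hfa, hfb, sub_self, zero_div, zero_sub] at hslope
  have : 0 < -f x₀ / (a - x₀) := div_pos (neg_pos.mpr hfx₀) (sub_pos.mpr hx₀a')
  linarith

namespace Albar

variable {p Q : ℝ}

noncomputable def gap (p Q a : ℝ) : ℝ := a ^ p - Q * (1 + p * (a - 1))

theorem eq_div_iff_gap_eq_zero (hp : 0 ≤ p) {a : ℝ} (ha : 1 ≤ a) :
    Q = a ^ p / (1 + p * (a - 1)) ↔ gap p Q a = 0 := by
  have hden : 0 < 1 + p * (a - 1) := by nlinarith
  rw [eq_div_iff hden.ne', gap, sub_eq_zero, eq_comm]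

theorem convexOn_gap (hp : 1 ≤ p) : ConvexOn ℝ (Ici 0) (gap p Q) := by
  have haffine : ConcaveOn ℝ (Ici 0) fun a : ℝ => Q * (1 + p * (a - 1)) :=
    ⟨convex_Ici 0, fun x _ y _ s t _ _ hst => by
      simp only [smul_eq_mul]
      exact le_of_eq (by linear_combination Q * (1 - p) * hst)⟩
  exact (convexOn_rpow hp).sub haffine

theorem continuous_gap (hp : 0 ≤ p) : Continuous (gap p Q) := by
  unfold gap
  fun_prop (disch := exact fun _ => Or.inr hp)

theorem gap_one : gap p Q 1 = 1 - Q := by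
  simp [gap]

theorem gap_rpow_inv (hp : 1 < p) (hQ : 0 < Q) :
    gap p Q ((p * Q) ^ (1 / (p - 1))) = (p - 1) * Q := by
  set M := (p * Q) ^ (1 / (p - 1)) with hMdef
  have hM : 0 < M := by positivity
  have hMp : M ^ (p - 1) = p * Q := by
    rw [hMdef, one_div, rpow_inv_rpow (by positivity) (by linarith)]
  have hsplit : M ^ p = M * M ^ (p - 1) := by
    rw [rpow_sub_one hM.ne', mul_div_cancel₀ _ hM.ne']
  rw [gap, hsplit, hMp]
  ring

theorem exists_gap_eq_zero (hp : 1 < p) (hQ : 1 < Q) : ∃ a, 1 ≤ a ∧ gap p Q a = 0 := by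
  have h1M : 1 ≤ (p * Q) ^ (1 / (p - 1)) :=
    one_le_rpow (by nlinarith) (div_nonneg zero_le_one (by linarith))
  have hsign : (0 : ℝ) ∈ Icc (gap p Q 1) (gap p Q ((p * Q) ^ (1 / (p - 1)))) := by
    rw [gap_one, gap_rpow_inv hp (by linarith)]
    constructor <;> nlinarith
  obtain ⟨a, ha, hga⟩ := intermediate_value_Icc h1M (continuous_gap (by linarith)).continuousOn hsign
  exact ⟨a, ha.1, hga⟩

theorem lt_rpow_sub_one_lt_of_gap_eq_zero (hp : 1 < p) (hQ : 1 < Q) {a : ℝ} (ha : 1 ≤ a)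
    (hga : gap p Q a = 0) : Q < a ^ (p - 1) ∧ a ^ (p - 1) < p * Q := by
  have ha1 : 1 < a := ha.lt_of_ne (by rintro rfl; rw [gap_one] at hga; linarith)
  have hsplit : a ^ p = a * a ^ (p - 1) := by
    rw [rpow_sub_one (by positivity), mul_div_cancel₀ _ (by positivity)]
  rw [gap, hsplit] at hga
  constructor
  · nlinarith [mul_pos (mul_pos (sub_pos.mpr hQ) (sub_pos.mpr hp)) (sub_pos.mpr ha1)]
  · nlinarith

end Albar

open Albar in
/-- For p > 1 and Q > 1, the equation Q = ᾱ^p/(1+p(ᾱ-1)) has a unique solution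
ᾱ in [1,∞), and this solution satisfies Q^{1/(p-1)} ≤ ᾱ < (pQ)^{1/(p-1)}. -/
theorem unique_albar_and_bounds (p Q : ℝ) (hp : 1 < p) (hQ : 1 < Q) :
    (∃! a : ℝ, 1 ≤ a ∧ Q = a ^ p / (1 + p * (a - 1))) ∧
    (∀ a : ℝ, 1 ≤ a → Q = a ^ p / (1 + p * (a - 1)) →
      Q ^ (1/(p-1)) ≤ a ∧ a < (p * Q) ^ (1/(p-1))) := by
  have hp0 : 0 ≤ p := by linarith
  have hp1 : 0 < p - 1 := by linarith
  refine ⟨?_, fun a ha heq => ?_⟩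
  · obtain ⟨a, ha, hga⟩ := exists_gap_eq_zero hp hQ
    refine ⟨a, ⟨ha, (eq_div_iff_gap_eq_zero hp0 ha).mpr hga⟩, fun b ⟨hb, heq⟩ => ?_⟩
    have hgb := (eq_div_iff_gap_eq_zero hp0 hb).mp heq
    have hmem : ∀ {x : ℝ}, 1 ≤ x → x ∈ Ici (0 : ℝ) := fun hx => zero_le_one.trans hx
    exact (convexOn_gap hp.le).eq_of_apply_eq_zero_of_apply_neg (hmem le_rfl) (hmem hb)
      (hmem ha) hb ha (by rw [gap_one]; linarith) hgb hga
  · obtain ⟨hlow, hupp⟩ :=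
      lt_rpow_sub_one_lt_of_gap_eq_zero hp hQ ha ((eq_div_iff_gap_eq_zero hp0 ha).mp heq)
    rw [one_div]
    exact ⟨(rpow_inv_le_iff_of_pos (by linarith) (by linarith) hp1).mpr hlow.le,
      (lt_rpow_inv_iff_of_pos (by linarith) (by positivity) hp1).mpr hupp⟩
end

section
/- Let p > 1 and β ∈ (1/p, 1) with Q^{1/(p-1)} = β^{p/(p-1)} / (1 + (p/(p-1))(β - 1)). Then x = 1/(1-β) satisfies x > p/(p-1) and (Q^{1/p})^{p/(p-1)} · ((x - p/(p-1))/x) · (x/(x-1))^{p/(p-1)} = 1; that is, p₁(p/(p-1), Q^{1/p}) = 1/(1-β). -/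
/-!
With `x = 1/(1-β)` one has `(x - p')/x = 1 + p'(β - 1)` and `x/(x - 1) = 1/β`, while
`(Q^{1/p})^{p'} = Q^{1/(p-1)}`. The defining relation of `β` is therefore exactly the equation
for `p₁(p', Q^{1/p})`, and `x > p'` is equivalent to `β > 1 - 1/p' = 1/p`.
-/

namespace Real

lemma rpow_one_div_rpow_div_sub_one {Q : ℝ} (hQ : 0 ≤ Q) {p : ℝ} (hp : p ≠ 0) :
    (Q ^ (1/p)) ^ (p/(p-1)) = Q ^ (1/(p-1)) := by
  rw [← rpow_mul hQ]
  congr 1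
  field_simp

end Real

lemma one_sub_one_div_div_sub_one {p : ℝ} (hp : p ≠ 0) : 1 - 1/(p/(p-1)) = 1/p := by
  field_simp
  ring

lemma lt_one_div_one_sub_iff {s β : ℝ} (hs : 0 < s) (hβ : β < 1) :
    s < 1/(1-β) ↔ 1 - 1/s < β := by
  rw [lt_one_div hs (sub_pos.2 hβ)]
  constructor <;> intro h <;> linarith

lemma one_div_one_sub_sub_div_one_div_one_sub {β : ℝ} (hβ : β ≠ 1) (s : ℝ) :
    (1/(1-β) - s) / (1/(1-β)) = 1 + s * (β - 1) := by
  have : 1 - β ≠ 0 := sub_ne_zero.2 hβ.symm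
  field_simp
  ring

lemma one_div_one_sub_div_one_div_one_sub_sub_one {β : ℝ} (hβ : β ≠ 1) :
    (1/(1-β)) / (1/(1-β) - 1) = 1/β := by
  have : 1 - β ≠ 0 := sub_ne_zero.2 hβ.symm
  rw [show 1/(1-β) - 1 = β/(1-β) by field_simp; ring, div_div_div_cancel_right₀ this]

/-- Corollary: if β ∈ (1/p, 1) satisfies Q^{1/(p-1)} = β^{p/(p-1)}/(1+(p/(p-1))(β-1)),
then x = 1/(1-β) satisfies x > p/(p-1) and
(Q^{1/p})^{p/(p-1)} · ((x - p/(p-1))/x) · (x/(x-1))^{p/(p-1)} = 1. -/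
theorem p1_dual_eq_one_div_one_sub_beta (p Q β : ℝ) (hp : 1 < p) (hQ : 1 < Q)
    (hβ₁ : 1/p < β) (hβ₂ : β < 1)
    (hβQ : Q ^ (1/(p-1)) = β ^ (p/(p-1)) / (1 + (p/(p-1)) * (β - 1))) :
    p/(p-1) < 1/(1-β) ∧
    (Q ^ (1/p)) ^ (p/(p-1)) * ((1/(1-β) - p/(p-1)) / (1/(1-β))) *
      ((1/(1-β)) / (1/(1-β) - 1)) ^ (p/(p-1)) = 1 := by
  have hp0 : p ≠ 0 := by positivity
  have hβ0 : 0 < β := lt_trans (by positivity) hβ₁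
  have hβ1 : β ≠ 1 := hβ₂.ne
  have hx : p/(p-1) < 1/(1-β) := by
    rw [lt_one_div_one_sub_iff (div_pos (by linarith) (by linarith)) hβ₂,
      one_sub_one_div_div_sub_one hp0]
    exact hβ₁
  have hA : 0 < 1 + (p/(p-1)) * (β - 1) := by
    rw [← one_div_one_sub_sub_div_one_div_one_sub hβ1]
    exact div_pos (sub_pos.2 hx) (lt_trans (by positivity) hx)
  refine ⟨hx, ?_⟩
  rw [Real.rpow_one_div_rpow_div_sub_one (by linarith) hp0, hβQ,
    one_div_one_sub_sub_div_one_div_one_sub hβ1, one_div_one_sub_div_one_div_one_sub_sub_one hβ1,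
    Real.div_rpow zero_le_one hβ0.le, Real.one_rpow, div_mul_cancel₀ _ hA.ne']
  exact mul_one_div_cancel (by positivity)
end

section
/- Let p > 1 and Q > 1. Let 1 - 1/p < α ≤ 1 ≤ ᾱ be the two solutions of Q = γ^p/(1+p(γ-1)), and let 1/p < β ≤ 1 ≤ β̄ be the two solutions of Q^{1/(p-1)} = γ^{p'}/(1 + p'(γ-1)) with p' = p/(p-1). Then β = ᾱ/(1 + p(ᾱ-1)) and β̄ = α/(1 + p(α-1)), and conversely α = β̄/(1 + p'(β̄-1)) and ᾱ = β/(1 + p'(β-1)). -/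
/-!
Let `Φ_q(γ) = γ^q / (1 + q(γ - 1))` (`powDivTangent q`) and `T_p(γ) = γ / (1 + p(γ - 1))`
(`conjPoint p`). For Hölder conjugate `p, q` one has `1 + q(T_p γ - 1) = (1 + p(γ - 1))⁻¹`,
hence `T_q ∘ T_p = id` and `Φ_q(T_p γ) = Φ_p(γ)^(q-1)` with `q - 1 = 1/(p - 1)`. Moreover
`T_p` maps `(1 - 1/p, 1]` into `[1, ∞)` and `[1, ∞)` into `(1/p, 1] = (1 - 1/q, 1]`. As
`Φ_q` is strictly decreasing on `(1 - 1/q, 1]` and strictly increasing on `[1, ∞)`, each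
solution for `(Q^(1/(p-1)), q)` is the image under `T_p` of the solution for `(Q, p)` on the
other branch.
-/

open Set

noncomputable def powDivTangent (q γ : ℝ) : ℝ := γ ^ q / (1 + q * (γ - 1))

noncomputable def conjPoint (p γ : ℝ) : ℝ := γ / (1 + p * (γ - 1))

lemma one_add_mul_sub_one_pos_s8 {q γ : ℝ} (hq : 0 < q) (hγ : 1 - q⁻¹ < γ) :
    0 < 1 + q * (γ - 1) := by
  have h := mul_lt_mul_of_pos_left hγ hq
  rw [mul_sub, mul_one, mul_inv_cancel₀ hq.ne'] at h
  linarith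

section Monotonicity

variable {q : ℝ}

lemma hasDerivAt_powDivTangent {γ : ℝ} (hγ : 0 < γ) (hD : 1 + q * (γ - 1) ≠ 0) :
    HasDerivAt (powDivTangent q)
      (q * (q - 1) * γ ^ (q - 1) * (γ - 1) / (1 + q * (γ - 1)) ^ 2) γ := by
  have hnum : HasDerivAt (fun x : ℝ => x ^ q) (q * γ ^ (q - 1)) γ :=
    Real.hasDerivAt_rpow_const (Or.inl hγ.ne')
  have hden : HasDerivAt (fun x : ℝ => 1 + q * (x - 1)) q γ := by
    simpa using (((hasDerivAt_id γ).sub_const 1).const_mul q).const_add 1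
  refine (hnum.div hden hD).congr_deriv ?_
  rw [Real.rpow_sub_one hγ.ne']
  field_simp
  ring

lemma strictMonoOn_powDivTangent (hq : 1 < q) :
    StrictMonoOn (powDivTangent q) (Ici 1) := by
  have hpos : ∀ γ ∈ Ici (1 : ℝ), 0 < γ ∧ 0 < 1 + q * (γ - 1) :=
    fun γ (hγ : 1 ≤ γ) => ⟨by linarith, by nlinarith⟩
  refine strictMonoOn_of_deriv_pos (convex_Ici 1) (fun γ hγ => ?_) fun γ hγ => ?_
  · obtain ⟨hγ0, hD⟩ := hpos γ hγ
    exact (hasDerivAt_powDivTangent hγ0 hD.ne').continuousAt.continuousWithinAt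
  · rw [interior_Ici] at hγ
    obtain ⟨hγ0, hD⟩ := hpos γ (Ioi_subset_Ici_self hγ)
    rw [(hasDerivAt_powDivTangent hγ0 hD.ne').deriv]
    have : 0 < γ - 1 := sub_pos.2 hγ
    have : 0 < q - 1 := sub_pos.2 hq
    positivity

lemma strictAntiOn_powDivTangent (hq : 1 < q) :
    StrictAntiOn (powDivTangent q) (Ioc (1 - q⁻¹) 1) := by
  have hpos : ∀ γ ∈ Ioc (1 - q⁻¹) 1, 0 < γ ∧ 0 < 1 + q * (γ - 1) := fun γ hγ =>
    ⟨lt_trans (sub_pos.2 (inv_lt_one_of_one_lt₀ hq)) hγ.1,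
      one_add_mul_sub_one_pos_s8 (by linarith) hγ.1⟩
  refine strictAntiOn_of_deriv_neg (convex_Ioc _ 1) (fun γ hγ => ?_) fun γ hγ => ?_
  · obtain ⟨hγ0, hD⟩ := hpos γ hγ
    exact (hasDerivAt_powDivTangent hγ0 hD.ne').continuousAt.continuousWithinAt
  · rw [interior_Ioc] at hγ
    obtain ⟨hγ0, hD⟩ := hpos γ (Ioo_subset_Ioc_self hγ)
    rw [(hasDerivAt_powDivTangent hγ0 hD.ne').deriv]
    refine div_neg_of_neg_of_pos (mul_neg_of_pos_of_neg ?_ (sub_neg.2 hγ.2)) (by positivity)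
    have : 0 < q - 1 := sub_pos.2 hq
    have : 0 < γ ^ (q - 1) := Real.rpow_pos_of_pos hγ0 _
    positivity

end Monotonicity

section Conjugate

variable {p q γ : ℝ}

lemma one_le_conjPoint (hp : 1 ≤ p) (hγ : 1 - p⁻¹ < γ) (hγ₁ : γ ≤ 1) :
    1 ≤ conjPoint p γ := by
  have hD := one_add_mul_sub_one_pos_s8 (by linarith) hγ
  rw [conjPoint, le_div_iff₀ hD]
  nlinarith

lemma conjPoint_mem_Ioc (hp : 1 < p) (hγ : 1 ≤ γ) : conjPoint p γ ∈ Ioc p⁻¹ 1 := by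
  have hD : 0 < 1 + p * (γ - 1) := by nlinarith
  refine ⟨?_, ?_⟩
  · rw [conjPoint, inv_eq_one_div, div_lt_div_iff₀ (by linarith) hD]
    linarith
  · rw [conjPoint, div_le_one hD]
    nlinarith

lemma one_add_mul_conjPoint_sub_one (hpq : p.HolderConjugate q) (hD : 1 + p * (γ - 1) ≠ 0) :
    1 + q * (conjPoint p γ - 1) = (1 + p * (γ - 1))⁻¹ := by
  have hq : q * (p - 1) = p := by rw [mul_comm]; exact hpq.sub_one_mul_conj
  rw [conjPoint]
  field_simp
  linear_combination (1 - γ) * hq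

lemma conjPoint_conjPoint (hpq : p.HolderConjugate q) (hD : 1 + p * (γ - 1) ≠ 0) :
    conjPoint q (conjPoint p γ) = γ := by
  change conjPoint p γ / (1 + q * (conjPoint p γ - 1)) = γ
  rw [one_add_mul_conjPoint_sub_one hpq hD, conjPoint, div_inv_eq_mul, div_mul_cancel₀ _ hD]

lemma powDivTangent_conjPoint (hpq : p.HolderConjugate q) (hγ : 0 < γ)
    (hD : 0 < 1 + p * (γ - 1)) :
    powDivTangent q (conjPoint p γ) = powDivTangent p γ ^ (q - 1) := by
  have hexp : p * (q - 1) = q := by linear_combination hpq.mul_eq_add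
  rw [powDivTangent, powDivTangent, one_add_mul_conjPoint_sub_one hpq hD.ne', conjPoint,
    Real.div_rpow hγ.le hD.le, Real.div_rpow (Real.rpow_nonneg hγ.le _) hD.le,
    ← Real.rpow_mul hγ.le, hexp, Real.rpow_sub_one hD.ne']
  field_simp

theorem eq_conjPoint_of_one_le (hpq : p.HolderConjugate q) (hγ : 1 ≤ γ) {β : ℝ}
    (hβ : β ∈ Ioc p⁻¹ 1) (h : powDivTangent q β = powDivTangent p γ ^ (q - 1)) :
    β = conjPoint p γ := by
  have hD : 0 < 1 + p * (γ - 1) := by nlinarith [hpq.lt]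
  have hmem := conjPoint_mem_Ioc hpq.lt hγ
  rw [← powDivTangent_conjPoint hpq (by linarith) hD] at h
  rw [← hpq.symm.one_sub_inv] at hβ hmem
  exact (strictAntiOn_powDivTangent hpq.symm.lt).injOn hβ hmem h

theorem eq_conjPoint_of_le_one (hpq : p.HolderConjugate q) (hγ : 1 - p⁻¹ < γ)
    (hγ₁ : γ ≤ 1) {β : ℝ} (hβ : 1 ≤ β)
    (h : powDivTangent q β = powDivTangent p γ ^ (q - 1)) :
    β = conjPoint p γ := by
  have hD := one_add_mul_sub_one_pos_s8 hpq.pos hγ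
  have hγ0 : 0 < γ := lt_trans (sub_pos.2 (inv_lt_one_of_one_lt₀ hpq.lt)) hγ
  rw [← powDivTangent_conjPoint hpq hγ0 hD] at h
  exact (strictMonoOn_powDivTangent hpq.symm.lt).injOn hβ (one_le_conjPoint hpq.lt.le hγ hγ₁) h

end Conjugate

theorem dual_pairs_general (p Q a ab b bb : ℝ) (hp : 1 < p)
    (ha₁ : 1 - 1/p < a) (ha₂ : a ≤ 1) (hab : 1 ≤ ab)
    (hQa : Q = a ^ p / (1 + p * (a - 1)))
    (hQab : Q = ab ^ p / (1 + p * (ab - 1)))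
    (hb₁ : 1/p < b) (hb₂ : b ≤ 1) (hbb : 1 ≤ bb)
    (hQb : Q ^ (1/(p-1)) = b ^ (p/(p-1)) / (1 + (p/(p-1)) * (b - 1)))
    (hQbb : Q ^ (1/(p-1)) = bb ^ (p/(p-1)) / (1 + (p/(p-1)) * (bb - 1))) :
    b = ab / (1 + p * (ab - 1)) ∧ bb = a / (1 + p * (a - 1)) ∧
    a = bb / (1 + (p/(p-1)) * (bb - 1)) ∧ ab = b / (1 + (p/(p-1)) * (b - 1)) := by
  have hpq : p.HolderConjugate (p / (p - 1)) :=
    (Real.holderConjugate_iff_eq_conjExponent hp).2 rfl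
  have hexp : 1 / (p - 1) = p / (p - 1) - 1 := by
    field_simp [hpq.sub_one_ne_zero]
    ring
  rw [one_div] at ha₁ hb₁
  rw [hexp] at hQb hQbb
  have hb : b = conjPoint p ab :=
    eq_conjPoint_of_one_le hpq hab ⟨hb₁, hb₂⟩ (by rw [powDivTangent, ← hQb, hQab]; rfl)
  have hbb : bb = conjPoint p a :=
    eq_conjPoint_of_le_one hpq ha₁ ha₂ hbb (by rw [powDivTangent, ← hQbb, hQa]; rfl)
  have hDa := one_add_mul_sub_one_pos_s8 hpq.pos ha₁
  have hDab : 0 < 1 + p * (ab - 1) := by nlinarith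
  refine ⟨hb, hbb, ?_, ?_⟩
  · rw [hbb]; exact (conjPoint_conjPoint hpq hDa.ne').symm
  · rw [hb]; exact (conjPoint_conjPoint hpq hDab.ne').symm

/-- Correspondence between the two solutions for (Q, p) and for (Q^{1/(p-1)}, p'). -/
theorem dual_pairs (p Q a ab b bb : ℝ) (hp : 1 < p) (hQ : 1 < Q)
    (ha₁ : 1 - 1/p < a) (ha₂ : a ≤ 1) (hab : 1 ≤ ab)
    (hQa : Q = a ^ p / (1 + p * (a - 1)))
    (hQab : Q = ab ^ p / (1 + p * (ab - 1)))
    (hb₁ : 1/p < b) (hb₂ : b ≤ 1) (hbb : 1 ≤ bb)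
    (hQb : Q ^ (1/(p-1)) = b ^ (p/(p-1)) / (1 + (p/(p-1)) * (b - 1)))
    (hQbb : Q ^ (1/(p-1)) = bb ^ (p/(p-1)) / (1 + (p/(p-1)) * (bb - 1))) :
    b = ab / (1 + p * (ab - 1)) ∧ bb = a / (1 + p * (a - 1)) ∧
    a = bb / (1 + (p/(p-1)) * (bb - 1)) ∧ ab = b / (1 + (p/(p-1)) * (b - 1)) :=
  dual_pairs_general p Q a ab b bb hp ha₁ ha₂ hab hQa hQab hb₁ hb₂ hbb hQb hQbb
end

section
/- Let p > 1, Q > 1, let ᾱ ≥ 1 be the unique solution in [1,∞) of Q = ᾱ^p/(1+p(ᾱ-1)), and let β ∈ (1/p, 1] satisfy Q^{1/(p-1)} = β^{p/(p-1)}/(1 + (p/(p-1))(β-1)). Then β/(pβ - 1) = ᾱ/(p-1). -/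
/-! The substitution `a = (p - 1) β / (p β - 1)` identifies `a ^ p / (1 + p (a - 1))` with the
`(p - 1)`-th power of `β ^ p' / (1 + p' (β - 1))`, and `β ≤ 1` gives `a ≥ 1`. So `a` solves the
defining equation of `ᾱ` in `[1, ∞)`, whence `a = ᾱ` by uniqueness, which is the claim. -/

open Real

noncomputable def dualPoint (p β : ℝ) : ℝ := (p - 1) * β / (p * β - 1)

lemma one_le_dualPoint {p β : ℝ} (hpβ : 1 < p * β) (hβ : β ≤ 1) : 1 ≤ dualPoint p β := by
  rw [dualPoint, le_div_iff₀ (by linarith)]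
  linarith

lemma one_add_mul_dualPoint_sub_one {p β : ℝ} (hpβ : 1 < p * β) :
    1 + p * (dualPoint p β - 1) = (p - 1) / (p * β - 1) := by
  have : p * β - 1 ≠ 0 := by linarith
  rw [dualPoint]
  field_simp
  ring

lemma one_add_conjExponent_mul_sub_one {p β : ℝ} (hp : 1 < p) :
    1 + p / (p - 1) * (β - 1) = (p * β - 1) / (p - 1) := by
  have : p - 1 ≠ 0 := by linarith
  field_simp
  ring

lemma dualPoint_rpow_div {p β : ℝ} (hp : 1 < p) (hpβ : 1 < p * β) :
    dualPoint p β ^ p / (1 + p * (dualPoint p β - 1))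
      = (β ^ (p / (p - 1)) / (1 + p / (p - 1) * (β - 1))) ^ (p - 1) := by
  have hβ : 0 < β := by nlinarith
  set r := (p - 1) / (p * β - 1) with hr
  have hr0 : 0 < r := div_pos (by linarith) (by linarith)
  have ha : dualPoint p β = β * r := by rw [dualPoint, hr]; ring
  have hβr : β ^ (p / (p - 1)) / (1 + p / (p - 1) * (β - 1)) = β ^ (p / (p - 1)) * r := by
    rw [one_add_conjExponent_mul_sub_one hp, div_div_eq_mul_div, mul_div_assoc]
  calc dualPoint p β ^ p / (1 + p * (dualPoint p β - 1))
      = β ^ p * r ^ (p - 1) * r / r := by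
        rw [one_add_mul_dualPoint_sub_one hpβ, ha, mul_rpow hβ.le hr0.le, mul_assoc,
          ← rpow_add_one hr0.ne', sub_add_cancel]
    _ = (β ^ (p / (p - 1)) * r) ^ (p - 1) := by
        rw [mul_div_cancel_right₀ _ hr0.ne', mul_rpow (by positivity) hr0.le,
          ← rpow_mul hβ.le, div_mul_cancel₀ _ (by linarith)]
    _ = _ := by rw [hβr]

theorem beta_albar_relation_general (p Q ab β : ℝ) (hp : 1 < p) (hQ : 1 < Q)
    (hab₃ : ∀ a : ℝ, 1 ≤ a → Q = a ^ p / (1 + p * (a - 1)) → a = ab)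
    (hβ₁ : 1/p < β) (hβ₂ : β ≤ 1)
    (hβ₃ : Q ^ (1/(p-1)) = β ^ (p/(p-1)) / (1 + (p/(p-1)) * (β - 1))) :
    β / (p * β - 1) = ab / (p - 1) := by
  have hpβ : 1 < p * β := by rwa [div_lt_iff₀ (by linarith), mul_comm] at hβ₁
  have hQ_eq : Q = dualPoint p β ^ p / (1 + p * (dualPoint p β - 1)) := by
    rw [dualPoint_rpow_div hp hpβ, ← hβ₃, ← rpow_mul (by linarith),
      one_div_mul_cancel (by linarith), rpow_one]
  have hab : dualPoint p β = ab := hab₃ _ (one_le_dualPoint hpβ hβ₂) hQ_eq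
  rw [← hab, dualPoint]
  field_simp [show p - 1 ≠ 0 by linarith, show p * β - 1 ≠ 0 by linarith]

/-- If ᾱ ≥ 1 solves Q = ᾱ^p/(1+p(ᾱ-1)) and β ∈ (1/p,1] solves
Q^{1/(p-1)} = β^{p/(p-1)}/(1+(p/(p-1))(β-1)), then β/(pβ-1) = ᾱ/(p-1). -/
theorem beta_albar_relation (p Q ab β : ℝ) (hp : 1 < p) (hQ : 1 < Q)
    (hab₁ : 1 ≤ ab) (hab₂ : Q = ab ^ p / (1 + p * (ab - 1)))
    (hab₃ : ∀ a : ℝ, 1 ≤ a → Q = a ^ p / (1 + p * (a - 1)) → a = ab)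
    (hβ₁ : 1/p < β) (hβ₂ : β ≤ 1)
    (hβ₃ : Q ^ (1/(p-1)) = β ^ (p/(p-1)) / (1 + (p/(p-1)) * (β - 1))) :
    β / (p * β - 1) = ab / (p - 1) :=
  beta_albar_relation_general p Q ab β hp hQ hab₃ hβ₁ hβ₂ hβ₃
end

section
/- Let p > 1, Q > 1, p₁ = p₁(p/(p-1), Q^{1/p}), and let ᾱ ≥ 1 be the unique solution in [1,∞) of Q = ᾱ^p/(1+p(ᾱ-1)). Then p - p₁/(p₁ - 1) = (p-1)/ᾱ. -/
/-! Write `q = p₁/(p₁-1)` for the conjugate exponent of `p₁`, so that `1 < q < p`, and put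
`a = (p-1)/(p-q) ≥ 1`. In terms of `q` the equation defining `p₁` collapses to
`Q q = a^(p-1)`, and since `1 + p(a-1) = a q` this says `Q = a^p/(1+p(a-1))`. By Bernoulli's
inequality `t ↦ t^p/(1+p(t-1))` is strictly increasing on `[1, ∞)`, so `a = ᾱ`, which is the
claim `p - q = (p-1)/ᾱ`. -/

open Real Set

lemma one_lt_div_sub_one {x : ℝ} (hx : 1 < x) : 1 < x / (x - 1) := by
  rw [one_lt_div (by linarith)]; linarith

lemma div_sub_one_lt_of_div_sub_one_lt {p x : ℝ} (hp : 1 < p) (hx : p / (p - 1) < x) :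
    x / (x - 1) < p := by
  have hx1 : 1 < x := (one_lt_div_sub_one hp).trans hx
  rw [div_lt_iff₀ (by linarith : (0:ℝ) < p - 1)] at hx
  rw [div_lt_iff₀ (by linarith)]; nlinarith

lemma rpow_mul_one_add_mul_sub_one_lt {p a b : ℝ} (hp : 1 < p) (ha : 1 ≤ a) (hab : a < b) :
    a ^ p * (1 + p * (b - 1)) < b ^ p * (1 + p * (a - 1)) := by
  have ha0 : 0 < a := by linarith
  have hba : 1 < b / a := (one_lt_div ha0).2 hab
  have bernoulli : 1 + p * (b / a - 1) < (b / a) ^ p := by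
    simpa using one_add_mul_self_lt_rpow_one_add (s := b / a - 1) (by linarith)
      (by linarith) hp
  rw [div_rpow (by linarith) ha0.le, lt_div_iff₀ (by positivity)] at bernoulli
  have key : 1 + p * (b - 1) ≤ (1 + p * (b / a - 1)) * (1 + p * (a - 1)) := by
    rw [← sub_nonneg]
    have : (1 + p * (b / a - 1)) * (1 + p * (a - 1)) - (1 + p * (b - 1))
        = p * (p - 1) * (a - 1) * (b - a) / a := by field_simp; ring
    rw [this]
    have := sub_nonneg.2 ha
    have := sub_pos.2 hab
    have := sub_pos.2 hp
    positivity
  calc a ^ p * (1 + p * (b - 1)) ≤ (1 + p * (b / a - 1)) * a ^ p * (1 + p * (a - 1)) := by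
        rw [mul_comm _ (a ^ p), mul_assoc]; gcongr
    _ < b ^ p * (1 + p * (a - 1)) := by gcongr

lemma strictMonoOn_rpow_div_one_add_mul_sub_one {p : ℝ} (hp : 1 < p) :
    StrictMonoOn (fun t : ℝ => t ^ p / (1 + p * (t - 1))) (Ici 1) := by
  intro a (ha : 1 ≤ a) b (hb : 1 ≤ b) hab
  have hden : ∀ t : ℝ, 1 ≤ t → 0 < 1 + p * (t - 1) := fun t ht => by nlinarith
  dsimp only
  rw [div_lt_div_iff₀ (hden a ha) (hden b hb)]
  exact rpow_mul_one_add_mul_sub_one_lt hp ha hab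

lemma mul_div_sub_one_eq_rpow {p Q x : ℝ} (hp : 1 < p) (hQ : 0 ≤ Q) (hx : p / (p - 1) < x)
    (h : (Q ^ (1 / p)) ^ (p / (p - 1)) * ((x - p / (p - 1)) / x) *
      (x / (x - 1)) ^ (p / (p - 1)) = 1) :
    Q * (x / (x - 1)) = ((p - 1) / (p - x / (x - 1))) ^ (p - 1) := by
  have hx1 : 1 < x := (one_lt_div_sub_one hp).trans hx
  have hq1 := one_lt_div_sub_one hx1
  have hqp := div_sub_one_lt_of_div_sub_one_lt hp hx
  have hp1 : p - 1 ≠ 0 := by linarith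
  have hx0 : x - 1 ≠ 0 := by linarith
  set q := x / (x - 1) with hq
  have hQpow : (Q ^ (1 / p)) ^ (p / (p - 1)) = Q ^ (p - 1)⁻¹ := by
    rw [← rpow_mul hQ]; congr 1; field_simp
  have hfactor : (x - p / (p - 1)) / x = (p - q) / ((p - 1) * q) := by
    rw [hq]; field_simp; ring
  have hqpow : q ^ (p / (p - 1)) = q * q ^ (p - 1)⁻¹ := by
    rw [← rpow_one_add' (by linarith) (by positivity)]; congr 1; field_simp; ring
  rw [hQpow, hfactor, hqpow] at h
  rw [← rpow_inv_eq (by positivity) (by positivity) hp1, mul_rpow hQ (by linarith),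
    eq_div_iff (by linarith)]
  calc Q ^ (p - 1)⁻¹ * q ^ (p - 1)⁻¹ * (p - q)
      = Q ^ (p - 1)⁻¹ * ((p - q) / ((p - 1) * q)) * (q * q ^ (p - 1)⁻¹) * (p - 1) := by
        field_simp
    _ = p - 1 := by rw [h, one_mul]

theorem delta_identity_general (p Q p₁ ab : ℝ) (hp : 1 < p)
    (hp₁ : p/(p-1) < p₁)
    (hp₁eq : (Q ^ (1/p)) ^ (p/(p-1)) * ((p₁ - p/(p-1)) / p₁) *
      (p₁ / (p₁ - 1)) ^ (p/(p-1)) = 1)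
    (hab₁ : 1 ≤ ab) (hab₂ : Q = ab ^ p / (1 + p * (ab - 1))) :
    p - p₁ / (p₁ - 1) = (p - 1) / ab := by
  have hQ : 0 ≤ Q := by rw [hab₂]; exact div_nonneg (by positivity) (by nlinarith)
  have hQq := mul_div_sub_one_eq_rpow hp hQ hp₁ hp₁eq
  have hq1 := one_lt_div_sub_one ((one_lt_div_sub_one hp).trans hp₁)
  have hqp := div_sub_one_lt_of_div_sub_one_lt hp hp₁
  set q := p₁ / (p₁ - 1)
  have hp1 : p - 1 ≠ 0 := by linarith
  have hpq : p - q ≠ 0 := by linarith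
  set a := (p - 1) / (p - q) with ha
  have ha1 : 1 ≤ a := by rw [ha, one_le_div (by linarith)]; linarith
  have hden : 1 + p * (a - 1) = a * q := by rw [ha]; field_simp; ring
  have hQa : Q = a ^ p / (1 + p * (a - 1)) := by
    rw [hden, ← div_div, ← rpow_sub_one (by positivity), ← hQq,
      mul_div_cancel_right₀ _ (by positivity)]
  have hab : a = ab :=
    (strictMonoOn_rpow_div_one_add_mul_sub_one hp).injOn ha1 hab₁ (hQa.symm.trans hab₂)
  rw [← hab, ha]
  field_simp

/-- With p₁ = p₁(p/(p-1), Q^{1/p}) and ᾱ ≥ 1 the unique solution of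
Q = ᾱ^p/(1+p(ᾱ-1)), one has p - p₁/(p₁-1) = (p-1)/ᾱ. -/
theorem delta_identity (p Q p₁ ab : ℝ) (hp : 1 < p) (hQ : 1 < Q)
    (hp₁ : p/(p-1) < p₁)
    (hp₁eq : (Q ^ (1/p)) ^ (p/(p-1)) * ((p₁ - p/(p-1)) / p₁) *
      (p₁ / (p₁ - 1)) ^ (p/(p-1)) = 1)
    (hab₁ : 1 ≤ ab) (hab₂ : Q = ab ^ p / (1 + p * (ab - 1))) :
    p - p₁ / (p₁ - 1) = (p - 1) / ab :=
  delta_identity_general p Q p₁ ab hp hp₁ hp₁eq hab₁ hab₂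
end

section
/- Let p > 1, t > 1, and let p₁(p,t) be the unique solution in (p,∞) of t^p·((x-p)/x)·(x/(x-1))^p = 1. Then p₁(p,t) is strictly decreasing in t: if 1 < t₁ < t₂ then p₁(p, t₂) < p₁(p, t₁), and p₁(p,t) → ∞ as t → 1⁺. -/
/-!
Write the equation as `t ^ p * F x = 1` with `F x = (x - p) / x * (x / (x - 1)) ^ p`.
Since `(log F)' = p (p - 1) / ((x - p) x (x - 1)) > 0`, `F` is strictly increasing on `(p, ∞)`,
so `F (p₁) = t ^ (-p)` decreasing in `t` forces `p₁` to decrease. By Bernoulli's inequality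
`1 - p / x < (1 - 1 / x) ^ p`, i.e. `F < 1`; as `t ^ (-p) → 1` when `t → 1⁺`, eventually
`F (p₁) > F M` for every `M > p`, hence `p₁ > M`.
-/

open Filter Real Set

/-- The factor of `t ^ p` in the equation defining `p₁(p, t)`. -/
noncomputable def p1Factor (p x : ℝ) : ℝ := (x - p) / x * (x / (x - 1)) ^ p

noncomputable def logP1Factor (p x : ℝ) : ℝ := log (x - p) + (p - 1) * log x - p * log (x - 1)

section p1Factor

variable {p x : ℝ}

lemma hasDerivAt_logP1Factor (hxp : x ≠ p) (hx₀ : x ≠ 0) (hx₁ : x ≠ 1) :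
    HasDerivAt (logP1Factor p) (p * (p - 1) / ((x - p) * x * (x - 1))) x := by
  have hderiv := ((((hasDerivAt_id x).sub_const p).log (sub_ne_zero.2 hxp)).add
    ((hasDerivAt_log hx₀).const_mul (p - 1))).sub
    ((((hasDerivAt_id x).sub_const 1).log (sub_ne_zero.2 hx₁)).const_mul p)
  refine hderiv.congr_deriv ?_
  simp only [id]
  field_simp [sub_ne_zero.2 hxp, sub_ne_zero.2 hx₁]
  ring

lemma strictMonoOn_logP1Factor (hp : 1 < p) : StrictMonoOn (logP1Factor p) (Ioi p) := by
  have hderiv : ∀ x ∈ Ioi p,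
      HasDerivAt (logP1Factor p) (p * (p - 1) / ((x - p) * x * (x - 1))) x :=
    fun x (hx : p < x) => hasDerivAt_logP1Factor hx.ne' (by linarith) (by linarith)
  refine strictMonoOn_of_hasDerivWithinAt_pos (convex_Ioi p)
    (fun x hx => (hderiv x hx).continuousAt.continuousWithinAt)
    (fun x hx => (hderiv x (interior_subset hx)).hasDerivWithinAt) ?_
  intro x hx
  rw [interior_Ioi, mem_Ioi] at hx
  have hden : 0 < (x - p) * x * (x - 1) := by
    apply mul_pos (mul_pos _ _) <;> linarith
  exact div_pos (mul_pos (by linarith) (by linarith)) hden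

lemma p1Factor_eq_exp_logP1Factor (hxp : p < x) (hx₁ : 1 < x) :
    p1Factor p x = exp (logP1Factor p x) := by
  have hx0 : 0 < x := by linarith
  have hx1 : 0 < x - 1 := by linarith
  rw [logP1Factor, exp_sub, exp_add, exp_log (by linarith), mul_comm (p - 1), mul_comm p,
    ← rpow_def_of_pos hx0, ← rpow_def_of_pos hx1, p1Factor, div_rpow hx0.le hx1.le,
    rpow_sub_one hx0.ne']
  field_simp

lemma strictMonoOn_p1Factor (hp : 1 < p) : StrictMonoOn (p1Factor p) (Ioi p) :=
  (exp_strictMono.comp_strictMonoOn (strictMonoOn_logP1Factor hp)).congr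
    fun _ (hx : p < _) => (p1Factor_eq_exp_logP1Factor hx (hp.trans hx)).symm

lemma p1Factor_lt_one (hp : 1 < p) (hx : p < x) : p1Factor p x < 1 := by
  have hx0 : 0 < x := by linarith
  have hx1 : 0 < x - 1 := by linarith
  have hbernoulli : 1 + p * (-x⁻¹) < (1 + -x⁻¹) ^ p :=
    one_add_mul_self_lt_rpow_one_add
      (neg_le_neg_iff.2 (inv_le_one_of_one_le₀ (by linarith))) (by simp [hx0.ne']) hp
  have hlhs : 1 + p * -x⁻¹ = (x - p) / x := by field_simp; ring
  have hbase : 1 + -x⁻¹ = (x / (x - 1))⁻¹ := by field_simp; ring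
  rw [hlhs, hbase, inv_rpow (by positivity)] at hbernoulli
  rwa [p1Factor, ← lt_div_iff₀ (by positivity), one_div]

lemma p1Factor_eq_inv_rpow {t : ℝ} (h : t ^ p * ((x - p) / x) * (x / (x - 1)) ^ p = 1) :
    p1Factor p x = (t ^ p)⁻¹ :=
  eq_inv_of_mul_eq_one_right (by rwa [p1Factor, ← mul_assoc])

end p1Factor

/-- p₁(p,t) is strictly decreasing in t and p₁(p,t) → ∞ as t → 1⁺. -/
theorem p1_decreasing_in_t (p : ℝ) (hp : 1 < p) :
    (∀ t₁ t₂ x₁ x₂ : ℝ, 1 < t₁ → t₁ < t₂ →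
      p < x₁ → t₁ ^ p * ((x₁ - p)/x₁) * (x₁/(x₁ - 1)) ^ p = 1 →
      p < x₂ → t₂ ^ p * ((x₂ - p)/x₂) * (x₂/(x₂ - 1)) ^ p = 1 → x₂ < x₁) ∧
    (∀ P : ℝ → ℝ,
      (∀ t : ℝ, 1 < t → p < P t ∧
        t ^ p * ((P t - p)/(P t)) * (P t/(P t - 1)) ^ p = 1) →
      Tendsto P (nhdsWithin 1 (Set.Ioi 1)) atTop) := by
  have hmono := strictMonoOn_p1Factor hp
  constructor
  · intro t₁ t₂ x₁ x₂ ht₁ ht₁₂ hx₁ h₁ hx₂ h₂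
    refine (hmono.lt_iff_lt hx₂ hx₁).mp ?_
    rw [p1Factor_eq_inv_rpow h₁, p1Factor_eq_inv_rpow h₂]
    exact inv_strictAnti₀ (rpow_pos_of_pos (by linarith) p)
      (rpow_lt_rpow (by linarith) ht₁₂ (by linarith))
  · intro P hP
    have hinv_rpow : Tendsto (fun t : ℝ => (t ^ p)⁻¹) (nhdsWithin 1 (Ioi 1)) (nhds 1) := by
      have := (continuousAt_rpow_const 1 p (Or.inl one_ne_zero)).tendsto.inv₀ (by simp)
      rw [one_rpow, inv_one] at this
      exact this.mono_left nhdsWithin_le_nhds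
    rw [tendsto_atTop]
    intro b
    have hM : p < max b (p + 1) := (lt_add_one p).trans_le (le_max_right _ _)
    filter_upwards [hinv_rpow.eventually_const_lt (p1Factor_lt_one hp hM), self_mem_nhdsWithin]
      with t ht ht₁
    obtain ⟨hPt, hPeq⟩ := hP t ht₁
    rw [← p1Factor_eq_inv_rpow hPeq] at ht
    exact (le_max_left _ _).trans ((hmono.lt_iff_lt hM hPt).mp ht).le
end
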